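/- The satisfiability problem for the non-uniformly non-transitive logic LTL_{Past} is decidable: the predicate 'there exist a bound function f, a valuation V, and a state a ∈ ℕ such that (V,f,a) ⊨ φ' is a decidable (computable) predicate on the countable set of formulas. -/

import Mathlib

/-- Formulas of the language of `LTL_{Past,m}`: atoms, negation, conjunction,
`N` (next) and `S` (since). -/
inductive Formula : Type
  | atom : ℕ → Formula
  | neg : Formula → Formula
  | conj : Formula → Formula → Formula
  | next : Formula → Formula
  | since : Formula → Formula → Formula
deriving DecidableEq

namespace Formula

/-- Implication, defined as usual from `¬` and `∧`. -/
def imp (φ ψ : Formula) : Formula := .neg (.conj φ (.neg ψ))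

/-- Disjunction, defined as usual from `¬` and `∧`. -/
def disj (φ ψ : Formula) : Formula := .neg (.conj (.neg φ) (.neg ψ))

/-- The constant true formula `⊤`, defined as usual. -/
def top : Formula := imp (.atom 0) (.atom 0)

/-- `□φ` abbreviates `¬(⊤ S ¬φ)`. -/
def box (φ : Formula) : Formula := .neg (.since top (.neg φ))

end Formula

/-- Truth of a formula at a state `a : ℕ` in a model given by a valuation
`V : ℕ → Set ℕ`, in the bounded (measure of intransitivity `m`) semantics. -/
def Sat (m : ℕ) (V : ℕ → Set ℕ) : Formula → ℕ → Prop
  | .atom i, a => a ∈ V i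
  | .neg φ, a => ¬ Sat m V φ a
  | .conj φ ψ, a => Sat m V φ a ∧ Sat m V ψ a
  | .next φ, a => Sat m V φ (a + 1)
  | .since φ ψ, a =>
      ∃ b, a ≤ b ∧ b ≤ a + m ∧ Sat m V ψ b ∧ ∀ c, a ≤ c → c < b → Sat m V φ c

/-- A formula is valid in a model `V` if it is true at every state. -/
def ValidIn (m : ℕ) (V : ℕ → Set ℕ) (φ : Formula) : Prop := ∀ a : ℕ, Sat m V φ a

/-- The logic `LTL_{Past,m}`: the set of formulas valid in every model. -/
def Logic (m : ℕ) : Set Formula := { φ | ∀ V : ℕ → Set ℕ, ValidIn m V φ }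

/-- Truth at a state in the unbounded (transitive) semantics of `LTL`. -/
def SatU (V : ℕ → Set ℕ) : Formula → ℕ → Prop
  | .atom i, a => a ∈ V i
  | .neg φ, a => ¬ SatU V φ a
  | .conj φ ψ, a => SatU V φ a ∧ SatU V ψ a
  | .next φ, a => SatU V φ (a + 1)
  | .since φ ψ, a =>
      ∃ b, a ≤ b ∧ SatU V ψ b ∧ ∀ c, a ≤ c → c < b → SatU V φ c

/-- The transitive logic `LTL`: formulas true at every state of every model in
the unbounded semantics. -/
def LogicU : Set Formula := { φ | ∀ (V : ℕ → Set ℕ) (a : ℕ), SatU V φ a }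

/-- Truth at a state in the non-uniformly non-transitive semantics, where the
reach of `S` at state `a` is bounded by `f a` for a bound function `f`. -/
def SatB (f : ℕ → ℕ) (V : ℕ → Set ℕ) : Formula → ℕ → Prop
  | .atom i, a => a ∈ V i
  | .neg φ, a => ¬ SatB f V φ a
  | .conj φ ψ, a => SatB f V φ a ∧ SatB f V ψ a
  | .next φ, a => SatB f V φ (a + 1)
  | .since φ ψ, a =>
      ∃ b, a ≤ b ∧ b ≤ f a ∧ SatB f V ψ b ∧ ∀ c, a ≤ c → c < b → SatB f V φ c

/-- The non-uniformly non-transitive logic `LTL_{Past}`: formulas true at every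
state of every model over every bound function. -/
def LogicPast : Set Formula :=
  { φ | ∀ f : ℕ → ℕ, (∀ i, i < f i) → (∀ i, f i < f (i + 1)) →
      ∀ (V : ℕ → Set ℕ) (a : ℕ), SatB f V φ a }

/-- Substitutions map atoms to formulas and extend homomorphically. -/
def substF (σ : ℕ → Formula) : Formula → Formula
  | .atom i => σ i
  | .neg φ => .neg (substF σ φ)
  | .conj φ ψ => .conj (substF σ φ) (substF σ ψ)
  | .next φ => .next (substF σ φ)
  | .since φ ψ => .since (substF σ φ) (substF σ ψ)

/-- An inference rule: a finite list of premises and a conclusion. -/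
structure Rule : Type where
  premises : List Formula
  conclusion : Formula
deriving DecidableEq

/-- A rule is valid in a model `V` if validity of all premises in `V` implies
validity of the conclusion in `V`. -/
def RuleValid (m : ℕ) (V : ℕ → Set ℕ) (r : Rule) : Prop :=
  (∀ φ ∈ r.premises, ValidIn m V φ) → ValidIn m V r.conclusion

/-- A rule is admissible in `LTL_{Past,m}` if every substitution making all
premises theorems also makes the conclusion a theorem. -/
def Admissible (m : ℕ) (r : Rule) : Prop :=
  ∀ σ : ℕ → Formula,
    (∀ φ ∈ r.premises, substF σ φ ∈ Logic m) → substF σ r.conclusion ∈ Logic m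

/-- Admissibility in the transitive logic `LTL`. -/
def AdmissibleU (r : Rule) : Prop :=
  ∀ σ : ℕ → Formula,
    (∀ φ ∈ r.premises, substF σ φ ∈ LogicU) → substF σ r.conclusion ∈ LogicU

/-- The number of symbols in a formula. -/
def sizeF : Formula → ℕ
  | .atom _ => 1
  | .neg φ => sizeF φ + 1
  | .conj φ ψ => sizeF φ + sizeF ψ + 1
  | .next φ => sizeF φ + 1
  | .since φ ψ => sizeF φ + sizeF ψ + 1

/-- The number of symbols in a rule. -/
def ruleSize (r : Rule) : ℕ :=
  (r.premises.map sizeF).sum + sizeF r.conclusion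

/-- An (injective) numerical encoding of formulas. -/
def encF : Formula → ℕ
  | .atom i => 5 * i
  | .neg φ => 5 * encF φ + 1
  | .conj φ ψ => 5 * Nat.pair (encF φ) (encF ψ) + 2
  | .next φ => 5 * encF φ + 3
  | .since φ ψ => 5 * Nat.pair (encF φ) (encF ψ) + 4

/-- An (injective) numerical encoding of rules. -/
def encR (r : Rule) : ℕ :=
  Nat.pair (Encodable.encode (r.premises.map encF)) (encF r.conclusion)

/-- `lit true φ = φ` and `lit false φ = ¬φ`. -/
def lit (t : Bool) (φ : Formula) : Formula := if t then φ else .neg φ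

/-- Conjunction of a list of formulas. -/
def bigConj : List Formula → Formula
  | [] => Formula.top
  | [φ] => φ
  | φ :: ψ :: rest => .conj φ (bigConj (ψ :: rest))

/-- Disjunction of a list of formulas. -/
def bigDisj : List Formula → Formula
  | [] => .neg Formula.top
  | [φ] => φ
  | φ :: ψ :: rest => Formula.disj φ (bigDisj (ψ :: rest))

/-- A single disjunct of a reduced normal form over variables `x_1,…,x_n`
(the atoms `0,…,n-1`): for each `i` a literal over `x_i`, for each `i` a
literal over `N x_i`, and for each pair `i ≠ k` a literal over `x_i S x_k`. -/
def disjunct (n : ℕ) (t0 t1 : Fin n → Bool) (t2 : Fin n → Fin n → Bool) : Formula :=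
  bigConj
    (((List.finRange n).map fun i => lit (t0 i) (.atom i)) ++
     ((List.finRange n).map fun i => lit (t1 i) (.next (.atom i))) ++
     ((List.finRange n).flatMap fun i =>
        ((List.finRange n).filter fun k => k != i).map fun k =>
          lit (t2 i k) (.since (.atom i) (.atom k))))

/-- A rule is in reduced normal form if it has the shape `ε / x_1`, where `ε`
is a disjunction of disjuncts as above. -/
def IsRNF (r : Rule) : Prop :=
  ∃ n : ℕ, 0 < n ∧
    ∃ ds : List ((Fin n → Bool) × (Fin n → Bool) × (Fin n → Fin n → Bool)),
      ds ≠ [] ∧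
      r.premises = [bigDisj (ds.map fun d => disjunct n d.1 d.2.1 d.2.2)] ∧
      r.conclusion = .atom 0

/-- Boolean formulas built from argument places `p_1,…,p_n, q_1,…,q_k` using
only the Boolean connectives `¬` and `∧`. -/
inductive BForm (n k : ℕ) : Type
  | pvar : Fin n → BForm n k
  | qvar : Fin k → BForm n k
  | neg : BForm n k → BForm n k
  | conj : BForm n k → BForm n k → BForm n k

/-- Substitute formulas for the argument places of a Boolean formula. -/
def BForm.substB {n k : ℕ} (α : Fin n → Formula) (δ : Fin k → Formula) :
    BForm n k → Formula
  | .pvar i => α i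
  | .qvar j => δ j
  | .neg φ => Formula.neg (BForm.substB α δ φ)
  | .conj φ ψ => Formula.conj (BForm.substB α δ φ) (BForm.substB α δ ψ)

/-!
A satisfiable formula `φ` has a model whose reach function satisfies `f x ≤ x + B` for a bound `B`
computable from `φ`. As long as `f^[|φ|] 0` is large, the range of `f` below it has a long gap;
by pigeonhole two states `u < v` in that gap carry the same profile (the truth values of all
subformulas at the next state and, for every subformula `ψ S χ`, the value of `χ` at the first
later state where `ψ ∧ ¬χ` fails). Deleting the block `(u, v]` then changes no truth value and
decreases `f^[|φ|] 0`. Once `f^[|φ|] 0 ≤ B`, only `f` below that point matters and `f` can be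
continued with slope one.

In such a model the truth of `φ` at `0` is witnessed by a certificate of size bounded in the code
of `φ`: the values of `f` and the truth table of all codes `≤ encF φ` on initial segments, each
code checked on a segment long enough for its subformulas. Checking a certificate is a bounded
quantifier formula, so the search for one is primitive recursive.
-/

structure IsBoundFunction (f : ℕ → ℕ) : Prop where
  lt_apply : ∀ i, i < f i
  apply_lt_apply_succ : ∀ i, f i < f (i + 1)

def Satisfiable (φ : Formula) : Prop :=
  ∃ f, IsBoundFunction f ∧ ∃ (V : ℕ → Set ℕ) (a : ℕ), SatB f V φ a

/-- `SinceHolds P Q x F`: `P S Q` holds at `x` when the reach of `S` at `x` is `F`. -/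
def SinceHolds (P Q : ℕ → Prop) (x F : ℕ) : Prop :=
  ∃ b, x ≤ b ∧ b ≤ F ∧ Q b ∧ ∀ c, x ≤ c → c < b → P c

theorem sinceHolds_congr {P Q P' Q' : ℕ → Prop} {x F : ℕ} (hP : ∀ c ≤ F, (P c ↔ P' c))
    (hQ : ∀ c ≤ F, (Q c ↔ Q' c)) : SinceHolds P Q x F ↔ SinceHolds P' Q' x F :=
  exists_congr fun b => ⟨fun ⟨hxb, hbF, hQb, hPb⟩ => ⟨hxb, hbF, (hQ b hbF).1 hQb,
      fun c hxc hcb => (hP c (by omega)).1 (hPb c hxc hcb)⟩,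
    fun ⟨hxb, hbF, hQb, hPb⟩ => ⟨hxb, hbF, (hQ b hbF).2 hQb,
      fun c hxc hcb => (hP c (by omega)).2 (hPb c hxc hcb)⟩⟩

theorem sinceHolds_iff_exists_lt {P Q : ℕ → Prop} {x F : ℕ} :
    SinceHolds P Q x F ↔ ∃ b < F + 1, x ≤ b ∧ Q b ∧ ∀ c < b, x ≤ c → P c :=
  exists_congr fun b => ⟨fun ⟨hxb, hbF, hQb, hPb⟩ => ⟨by omega, hxb, hQb,
    fun c hcb hxc => hPb c hxc hcb⟩, fun ⟨hbF, hxb, hQb, hPb⟩ => ⟨hxb, by omega, hQb,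
    fun c hxc hcb => hPb c hcb hxc⟩⟩

theorem satB_since {f : ℕ → ℕ} {V : ℕ → Set ℕ} {ψ χ : Formula} {x : ℕ} :
    SatB f V (.since ψ χ) x ↔ SinceHolds (SatB f V ψ) (SatB f V χ) x (f x) := Iff.rfl

namespace IsBoundFunction

variable {f : ℕ → ℕ} (hf : IsBoundFunction f)
include hf

theorem strictMono : StrictMono f :=
  strictMono_nat_of_lt_succ hf.apply_lt_apply_succ

theorem id_le : id ≤ f := fun i => (hf.lt_apply i).le

theorem le_iterate (j a : ℕ) : a ≤ f^[j] a :=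
  Function.id_le_iterate_of_id_le hf.id_le j a

theorem iterate_le_iterate_left {j k : ℕ} (h : j ≤ k) (a : ℕ) : f^[j] a ≤ f^[k] a :=
  Function.monotone_iterate_of_id_le hf.id_le h a

theorem iterate_le_iterate_of_le_apply {a b j k : ℕ} (hb : b ≤ f a) (hjk : j < k) :
    f^[j] b ≤ f^[k] a :=
  calc f^[j] b ≤ f^[j] (f a) := hf.strictMono.monotone.iterate j hb
    _ = f^[j + 1] a := (Function.iterate_succ_apply f j a).symm
    _ ≤ f^[k] a := hf.iterate_le_iterate_left hjk a

end IsBoundFunction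

theorem one_le_sizeF (θ : Formula) : 1 ≤ sizeF θ := by
  cases θ <;> simp [sizeF]

def shiftBound (f : ℕ → ℕ) (s : ℕ) : ℕ → ℕ := fun i => f (i + s) - s

def shiftVal (V : ℕ → Set ℕ) (s : ℕ) : ℕ → Set ℕ := fun i => {x | x + s ∈ V i}

theorem IsBoundFunction.shift {f : ℕ → ℕ} (hf : IsBoundFunction f) (s : ℕ) :
    IsBoundFunction (shiftBound f s) where
  lt_apply i := by have := hf.lt_apply (i + s); simp only [shiftBound]; omega
  apply_lt_apply_succ i := by
    have := hf.lt_apply (i + s)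
    have := hf.apply_lt_apply_succ (i + s)
    simp only [shiftBound, Nat.add_right_comm i 1 s]
    omega

theorem satB_shift {f : ℕ → ℕ} (hf : IsBoundFunction f) (V : ℕ → Set ℕ) (s : ℕ) (θ : Formula)
    (x : ℕ) :
    SatB (shiftBound f s) (shiftVal V s) θ x ↔ SatB f V θ (x + s) := by
  induction θ generalizing x with
  | atom i => rfl
  | neg ψ ih => exact not_congr (ih x)
  | conj ψ χ ih₁ ih₂ => exact and_congr (ih₁ x) (ih₂ x)
  | next ψ ih => simp only [SatB, ih, Nat.add_right_comm x 1 s]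
  | since ψ χ ih₁ ih₂ =>
    have := hf.lt_apply (x + s)
    simp only [SatB, ih₁, ih₂, shiftBound]
    constructor
    · rintro ⟨b, hxb, hbf, hχ, hψ⟩
      refine ⟨b + s, by omega, by omega, hχ, fun c hxc hcb => ?_⟩
      simpa [Nat.sub_add_cancel (show s ≤ c by omega)] using hψ (c - s) (by omega) (by omega)
    · rintro ⟨b, hxb, hbf, hχ, hψ⟩
      refine ⟨b - s, by omega, by omega, ?_, fun c hxc hcb => hψ (c + s) (by omega) (by omega)⟩
      rwa [Nat.sub_add_cancel (show s ≤ b by omega)]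

theorem satisfiable_iff_satB_zero {φ : Formula} :
    Satisfiable φ ↔ ∃ f, IsBoundFunction f ∧ ∃ V, SatB f V φ 0 := by
  refine ⟨fun ⟨f, hf, V, a, hφ⟩ => ⟨shiftBound f a, hf.shift a, shiftVal V a, ?_⟩,
    fun ⟨f, hf, V, hφ⟩ => ⟨f, hf, V, 0, hφ⟩⟩
  rwa [satB_shift hf V a, zero_add]

theorem satB_congr_bound {f g : ℕ → ℕ} (hf : IsBoundFunction f) {V : ℕ → Set ℕ} (θ : Formula)
    (a : ℕ) (hfg : ∀ x ≤ f^[sizeF θ - 1] a, f x = g x) : SatB f V θ a ↔ SatB g V θ a := by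
  have hsub : ∀ {j k a b}, j < k → b ≤ f a → (∀ x ≤ f^[k] a, f x = g x) →
      ∀ x ≤ f^[j] b, f x = g x :=
    fun hjk hb h x hx => h x (hx.trans (hf.iterate_le_iterate_of_le_apply hb hjk))
  induction θ generalizing a with
  | atom i => rfl
  | neg ψ ih =>
    have := one_le_sizeF ψ
    exact not_congr (ih a (hsub (by simp only [sizeF]; omega) (hf.lt_apply a).le hfg))
  | conj ψ χ ih₁ ih₂ =>
    have := one_le_sizeF ψ
    have := one_le_sizeF χ
    exact and_congr (ih₁ a (hsub (by simp only [sizeF]; omega) (hf.lt_apply a).le hfg))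
      (ih₂ a (hsub (by simp only [sizeF]; omega) (hf.lt_apply a).le hfg))
  | next ψ ih =>
    have := one_le_sizeF ψ
    exact ih (a + 1) (hsub (by simp only [sizeF]; omega) (hf.lt_apply a) hfg)
  | since ψ χ ih₁ ih₂ =>
    have := one_le_sizeF ψ
    have := one_le_sizeF χ
    rw [satB_since, satB_since, ← hfg a (hf.le_iterate _ a)]
    exact sinceHolds_congr (fun c hc => ih₁ c (hsub (by simp only [sizeF]; omega) hc hfg))
      (fun c hc => ih₂ c (hsub (by simp only [sizeF]; omega) hc hfg))

namespace Formula

def subformulas : Formula → Finset Formula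
  | atom i => {atom i}
  | neg ψ => insert (neg ψ) ψ.subformulas
  | conj ψ χ => insert (conj ψ χ) (ψ.subformulas ∪ χ.subformulas)
  | next ψ => insert (next ψ) ψ.subformulas
  | since ψ χ => insert (since ψ χ) (ψ.subformulas ∪ χ.subformulas)

theorem mem_subformulas_self (φ : Formula) : φ ∈ φ.subformulas := by
  cases φ <;> simp [subformulas]

theorem subformulas_subset {φ θ : Formula} (h : θ ∈ φ.subformulas) :
    θ.subformulas ⊆ φ.subformulas := by
  induction φ with
  | atom i => simp_all [subformulas]
  | neg ψ ih | next ψ ih =>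
    simp only [subformulas, Finset.mem_insert] at h ⊢
    rcases h with rfl | h
    · exact subset_rfl
    · exact (ih h).trans (Finset.subset_insert _ _)
  | conj ψ χ ih₁ ih₂ | since ψ χ ih₁ ih₂ =>
    simp only [subformulas, Finset.mem_insert, Finset.mem_union] at h ⊢
    rcases h with rfl | h | h
    · exact subset_rfl
    · exact (ih₁ h).trans (Finset.subset_union_left.trans (Finset.subset_insert _ _))
    · exact (ih₂ h).trans (Finset.subset_union_right.trans (Finset.subset_insert _ _))

theorem card_subformulas_le (φ : Formula) : φ.subformulas.card ≤ sizeF φ := by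
  induction φ with
  | atom i => simp [subformulas, sizeF]
  | neg ψ ih | next ψ ih =>
    exact (Finset.card_insert_le _ _).trans (by simp only [sizeF]; omega)
  | conj ψ χ ih₁ ih₂ | since ψ χ ih₁ ih₂ =>
    have := Finset.card_union_le ψ.subformulas χ.subformulas
    exact (Finset.card_insert_le _ _).trans (by simp only [sizeF]; omega)

variable {φ ψ χ : Formula}

theorem mem_subformulas_of_neg (h : neg ψ ∈ φ.subformulas) : ψ ∈ φ.subformulas :=
  subformulas_subset h (by simp [subformulas, mem_subformulas_self])

theorem mem_subformulas_of_next (h : next ψ ∈ φ.subformulas) : ψ ∈ φ.subformulas :=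
  subformulas_subset h (by simp [subformulas, mem_subformulas_self])

theorem mem_subformulas_of_conj (h : conj ψ χ ∈ φ.subformulas) :
    ψ ∈ φ.subformulas ∧ χ ∈ φ.subformulas :=
  ⟨subformulas_subset h (by simp [subformulas, mem_subformulas_self]),
    subformulas_subset h (by simp [subformulas, mem_subformulas_self])⟩

theorem mem_subformulas_of_since (h : since ψ χ ∈ φ.subformulas) :
    ψ ∈ φ.subformulas ∧ χ ∈ φ.subformulas :=
  ⟨subformulas_subset h (by simp [subformulas, mem_subformulas_self]),
    subformulas_subset h (by simp [subformulas, mem_subformulas_self])⟩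

end Formula

namespace Cut

variable (u v : ℕ)

/-! The model with the states `(u, v]` removed: `embed` enumerates the kept states in order and
`proj` inverts it on them. -/

def Kept (c : ℕ) : Prop := c ≤ u ∨ v < c

def embed (y : ℕ) : ℕ := if y ≤ u then y else y + (v - u)

def proj (x : ℕ) : ℕ := if x ≤ u then x else x - (v - u)

def bound (f : ℕ → ℕ) : ℕ → ℕ := fun y => proj u v (f (embed u v y))

def val (V : ℕ → Set ℕ) : ℕ → Set ℕ := fun i => {y | embed u v y ∈ V i}

variable {u v}

theorem embed_strictMono : StrictMono (embed u v) := by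
  intro y y' h; unfold embed; split_ifs <;> omega

theorem kept_embed (y : ℕ) : Kept u v (embed u v y) := by
  unfold Kept embed; split_ifs <;> omega

theorem embed_of_le {y : ℕ} (h : y ≤ u) : embed u v y = y := if_pos h

theorem embed_proj (huv : u ≤ v) {c : ℕ} (hc : Kept u v c) : embed u v (proj u v c) = c := by
  unfold Kept at hc; unfold embed proj; split_ifs <;> omega

theorem le_proj_iff (huv : u ≤ v) {y c : ℕ} (hc : Kept u v c) :
    y ≤ proj u v c ↔ embed u v y ≤ c := by
  conv_rhs => rw [← embed_proj huv hc]
  exact embed_strictMono.le_iff_le.symm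

section Bound

variable {f : ℕ → ℕ} (hf : ∀ a, Kept u v (f a))
include hf

theorem isBoundFunction_bound (huv : u ≤ v) (hbf : IsBoundFunction f) :
    IsBoundFunction (bound u v f) where
  lt_apply y := by
    have h₁ := hbf.lt_apply (embed u v y)
    have h₂ := hf (embed u v y)
    unfold bound; unfold Kept at h₂; unfold embed at *; unfold proj; split_ifs at * <;> omega
  apply_lt_apply_succ y := by
    have h₁ := hbf.strictMono (embed_strictMono (u := u) (v := v) (Nat.lt_add_one y))
    have h₂ := hf (embed u v y)
    have h₃ := hf (embed u v (y + 1))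
    unfold bound; unfold Kept at h₂ h₃; unfold proj; split_ifs <;> omega

theorem bound_iterate_zero (huv : u ≤ v) (j : ℕ) :
    (bound u v f)^[j] 0 = proj u v (f^[j] 0) := by
  induction j with
  | zero => simp [proj]
  | succ j ih =>
    have hkept : Kept u v (f^[j] 0) := by
      cases j with
      | zero => exact Or.inl (Nat.zero_le u)
      | succ j => rw [Function.iterate_succ_apply']; exact hf _
    rw [Function.iterate_succ_apply', ih, Function.iterate_succ_apply', bound,
      embed_proj huv hkept]

end Bound

def SinceHoldsKept (u v : ℕ) (P Q : ℕ → Prop) (x F : ℕ) : Prop :=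
  ∃ b, Kept u v b ∧ x ≤ b ∧ b ≤ F ∧ Q b ∧ ∀ c, Kept u v c → x ≤ c → c < b → P c

theorem sinceHolds_comp_embed_iff (huv : u ≤ v) {P Q : ℕ → Prop} {y F : ℕ} (hF : Kept u v F) :
    SinceHolds (P ∘ embed u v) (Q ∘ embed u v) y (proj u v F) ↔
      SinceHoldsKept u v P Q (embed u v y) F := by
  constructor
  · rintro ⟨b, hyb, hbF, hQ, hP⟩
    refine ⟨embed u v b, kept_embed b, embed_strictMono.monotone hyb, (le_proj_iff huv hF).1 hbF,
      hQ, fun c hc hyc hcb => ?_⟩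
    rw [← embed_proj huv hc] at hyc hcb ⊢
    exact hP _ (embed_strictMono.le_iff_le.1 hyc) (embed_strictMono.lt_iff_lt.1 hcb)
  · rintro ⟨b, hb, hyb, hbF, hQ, hP⟩
    rw [← embed_proj huv hb] at hyb hbF hQ hP
    exact ⟨proj u v b, embed_strictMono.le_iff_le.1 hyb, (le_proj_iff huv hF).2 hbF, hQ,
      fun c hyc hcb => hP _ (kept_embed c) (embed_strictMono.monotone hyc) (embed_strictMono hcb)⟩

def Neutral (P Q : ℕ → Prop) (c : ℕ) : Prop := P c ∧ ¬ Q c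

/-- Removing `(u, v]` does not change `P S Q` at kept states whose reach avoids `(u, w)`:
either the block is neutral, or the first non-neutral states after `u` and after `v` lie in
`(u, v]` and `(v, w]` and agree on `Q`. -/
def Compatible (P Q : ℕ → Prop) (u v w : ℕ) : Prop :=
  (∀ c, u < c → c ≤ v → Neutral P Q c) ∨
  ∃ z t, u < z ∧ z ≤ v ∧ v < t ∧ t ≤ w ∧ ¬ Neutral P Q z ∧ ¬ Neutral P Q t ∧
    (∀ c, u < c → c < z → Neutral P Q c) ∧ (∀ c, v < c → c < t → Neutral P Q c) ∧ (Q z ↔ Q t)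

theorem q_of_not_neutral {P Q : ℕ → Prop} {x b z : ℕ} (hxz : x ≤ z) (hnz : ¬ Neutral P Q z)
    (hQb : Q b) (hP : ∀ c, x ≤ c → c < b → P c) (hzb : z ≤ b) : Q z := by
  rcases hzb.eq_or_lt with rfl | h
  · exact hQb
  · by_contra hQ
    exact hnz ⟨hP z hxz h, hQ⟩

theorem sinceHolds_iff_sinceHoldsKept {P Q : ℕ → Prop} {w x F : ℕ}
    (hc : Compatible P Q u v w) (hx : Kept u v x) (hF : F ≤ u ∨ w ≤ F) :
    SinceHolds P Q x F ↔ SinceHoldsKept u v P Q x F := by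
  unfold Kept at hx
  constructor
  · rintro ⟨b, hxb, hbF, hQb, hP⟩
    by_cases hb : Kept u v b
    · exact ⟨b, hb, hxb, hbF, hQb, fun c _ => hP c⟩
    unfold Kept at hb
    rcases hc with hneu | ⟨z, t, huz, hzv, hvt, htw, hnz, -, hbefz, hbeft, hzt⟩
    · exact absurd hQb (hneu b (by omega) (by omega)).2
    have hzb : z ≤ b := by
      by_contra h
      exact (hbefz b (by omega) (by omega)).2 hQb
    refine ⟨t, Or.inr hvt, by omega, by omega,
      hzt.1 (q_of_not_neutral (by omega) hnz hQb hP hzb), fun c hc hxc hct => ?_⟩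
    rcases hc with hcu | hvc
    · exact hP c hxc (by omega)
    · exact (hbeft c hvc hct).1
  · rintro ⟨b, hb, hxb, hbF, hQb, hP⟩
    by_cases hskip : x ≤ u ∧ v < b
    · rcases hc with hneu | ⟨z, t, huz, hzv, hvt, -, -, hnt, hbefz, hbeft, hzt⟩
      · refine ⟨b, hxb, hbF, hQb, fun c hxc hcb => ?_⟩
        by_cases hc : Kept u v c
        · exact hP c hc hxc hcb
        · unfold Kept at hc
          exact (hneu c (by omega) (by omega)).1
      have htb : t ≤ b := by
        by_contra h
        exact (hbeft b hskip.2 (by omega)).2 hQb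
      have hQt : Q t := q_of_not_neutral (x := v + 1) (by omega) hnt hQb
        (fun c hvc hcb => hP c (Or.inr (by omega)) (by omega) hcb) htb
      refine ⟨z, by omega, by omega, hzt.2 hQt, fun c hxc hcz => ?_⟩
      by_cases hcu : c ≤ u
      · exact hP c (Or.inl hcu) hxc (by omega)
      · exact (hbefz c (by omega) hcz).1
    · exact ⟨b, hxb, hbF, hQb, fun c hxc hcb => hP c (by unfold Kept at hb ⊢; omega) hxc hcb⟩

theorem embed_succ_of_ne {y : ℕ} (h : y ≠ u) : embed u v (y + 1) = embed u v y + 1 := by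
  unfold embed; split_ifs <;> omega

theorem embed_succ_self (huv : u ≤ v) : embed u v (u + 1) = v + 1 := by
  unfold embed; split_ifs <;> omega

open Formula in
theorem satB_bound_val_iff {f : ℕ → ℕ} {V : ℕ → Set ℕ} {φ : Formula} {w : ℕ} (huv : u < v)
    (hvw : v < w) (hf : ∀ a, f a ≤ u ∨ w ≤ f a)
    (hnext : ∀ θ ∈ φ.subformulas, SatB f V θ (u + 1) ↔ SatB f V θ (v + 1))
    (hsince : ∀ ψ χ, since ψ χ ∈ φ.subformulas →
      Compatible (SatB f V ψ) (SatB f V χ) u v w)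
    (θ : Formula) (hθ : θ ∈ φ.subformulas) (y : ℕ) :
    SatB (bound u v f) (val u v V) θ y ↔ SatB f V θ (embed u v y) := by
  induction θ generalizing y with
  | atom i => rfl
  | neg ψ ih => exact not_congr (ih (mem_subformulas_of_neg hθ) y)
  | conj ψ χ ih₁ ih₂ =>
    exact and_congr (ih₁ (mem_subformulas_of_conj hθ).1 y) (ih₂ (mem_subformulas_of_conj hθ).2 y)
  | next ψ ih =>
    have hψ := mem_subformulas_of_next hθ
    simp only [SatB, ih hψ]
    by_cases hy : y = u
    · rw [hy, embed_succ_self huv.le, embed_of_le le_rfl]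
      exact (hnext ψ hψ).symm
    · rw [embed_succ_of_ne hy]
  | since ψ χ ih₁ ih₂ =>
    have hψ : SatB (bound u v f) (val u v V) ψ = SatB f V ψ ∘ embed u v :=
      funext fun y => propext (ih₁ (mem_subformulas_of_since hθ).1 y)
    have hχ : SatB (bound u v f) (val u v V) χ = SatB f V χ ∘ embed u v :=
      funext fun y => propext (ih₂ (mem_subformulas_of_since hθ).2 y)
    have hkept : Kept u v (f (embed u v y)) := by
      rcases hf (embed u v y) with h | h
      · exact Or.inl h
      · exact Or.inr (by omega)
    rw [satB_since, satB_since, hψ, hχ, bound, sinceHolds_comp_embed_iff huv.le hkept,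
      sinceHolds_iff_sinceHoldsKept (hsince ψ χ hθ) (kept_embed y) (hf _)]

open Classical in
noncomputable def firstQ (P Q : ℕ → Prop) (w x : ℕ) : Option Prop :=
  if h : ∃ c, x < c ∧ c ≤ w ∧ ¬ Neutral P Q c then some (Q (Nat.find h)) else none

theorem compatible_of_firstQ_eq {P Q : ℕ → Prop} {u v w : ℕ} (hvw : v < w)
    (h : firstQ P Q w u = firstQ P Q w v) : Compatible P Q u v w := by
  classical
  by_cases hneu : ∀ c, u < c → c ≤ v → Neutral P Q c
  · exact Or.inl hneu
  push Not at hneu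
  obtain ⟨c₀, huc, hcv, hc₀⟩ := hneu
  have hu : ∃ c, u < c ∧ c ≤ w ∧ ¬ Neutral P Q c := ⟨c₀, huc, by omega, hc₀⟩
  have hv : ∃ c, v < c ∧ c ≤ w ∧ ¬ Neutral P Q c := by
    by_contra hv
    simp only [firstQ, dif_pos hu, dif_neg hv] at h
    exact Option.some_ne_none _ h
  simp only [firstQ, dif_pos hu, dif_pos hv, Option.some.injEq] at h
  obtain ⟨huz, -, hnz⟩ := Nat.find_spec hu
  obtain ⟨hvt, htw, hnt⟩ := Nat.find_spec hv
  have hzv : Nat.find hu ≤ v := (Nat.find_min' hu ⟨huc, by omega, hc₀⟩).trans hcv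
  refine Or.inr ⟨Nat.find hu, Nat.find hv, huz, hzv, hvt, htw, hnz, hnt, fun c huc hcz => ?_,
    fun c hvc hct => ?_, h ▸ Iff.rfl⟩
  · by_contra hc
    exact Nat.find_min hu hcz ⟨huc, by omega, hc⟩
  · by_contra hc
    exact Nat.find_min hv hct ⟨hvc, by omega, hc⟩

open Formula in
/-- Pigeonhole on the `6 ^ |subformulas|` possible profiles of the states `lo ≤ x < hi - 1`. -/
theorem exists_compatible_cut (φ : Formula) (f : ℕ → ℕ) (V : ℕ → Set ℕ) {lo hi : ℕ}
    (hlen : lo + 6 ^ φ.subformulas.card + 2 ≤ hi) :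
    ∃ u v, lo ≤ u ∧ u < v ∧ v < hi ∧
      (∀ θ ∈ φ.subformulas, SatB f V θ (u + 1) ↔ SatB f V θ (v + 1)) ∧
      ∀ ψ χ, since ψ χ ∈ φ.subformulas → Compatible (SatB f V ψ) (SatB f V χ) u v hi := by
  classical
  let profile : ℕ → φ.subformulas → Prop × Option Prop := fun x θ =>
    (SatB f V θ.1 (x + 1), match θ.1 with
      | since ψ χ => firstQ (SatB f V ψ) (SatB f V χ) hi x
      | _ => none)
  have hcard : (Finset.univ : Finset (φ.subformulas → Prop × Option Prop)).card <
      (Finset.Ico lo (hi - 1)).card := by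
    simp only [Finset.card_univ, Fintype.card_fun, Fintype.card_prod, Fintype.card_option,
      Fintype.card_prop, Fintype.card_coe, Nat.card_Ico]
    norm_num
    omega
  obtain ⟨x, hx, y, hy, hxy, hprof⟩ :=
    Finset.exists_ne_map_eq_of_card_lt_of_maps_to hcard (fun x _ => Finset.mem_univ (profile x))
  simp only [Finset.mem_Ico] at hx hy
  obtain ⟨u, v, hu, hv, huv, heq⟩ : ∃ u v, lo ≤ u ∧ v < hi - 1 ∧ u < v ∧ profile u = profile v := by
    rcases Nat.lt_or_gt_of_ne hxy with h | h
    · exact ⟨x, y, hx.1, hy.2, h, hprof⟩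
    · exact ⟨y, x, hy.1, hx.2, h, hprof.symm⟩
  refine ⟨u, v, hu, huv, by omega, fun θ hθ => ?_, fun ψ χ hθ => ?_⟩
  · exact Iff.of_eq (congrArg Prod.fst (congrFun heq ⟨θ, hθ⟩))
  · exact compatible_of_firstQ_eq (by omega) (congrArg Prod.snd (congrFun heq ⟨_, hθ⟩))

end Cut

namespace IsBoundFunction

variable {f : ℕ → ℕ} (hf : IsBoundFunction f)
include hf

theorem apply_succ_le_of_no_gap {G H : ℕ}
    (hno : ∀ lo hi, lo + G + 2 ≤ hi → hi ≤ H → ∃ a, lo < f a ∧ f a < hi) (x : ℕ)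
    (hx : f x ≤ H) : f x + 1 ≤ (G + 2) * (x + 1) := by
  induction x with
  | zero =>
    by_contra h
    obtain ⟨a, -, ha⟩ := hno 0 (f 0) (by omega) hx
    exact (hf.strictMono.monotone (Nat.zero_le a)).not_gt ha
  | succ x ih =>
    have hfx := ih ((hf.apply_lt_apply_succ x).le.trans hx)
    have : (G + 2) * (x + 1 + 1) = (G + 2) * (x + 1) + (G + 2) := by ring
    by_contra h
    obtain ⟨a, h₁, h₂⟩ := hno (f x) (f (x + 1)) (by omega) hx
    rw [hf.strictMono.lt_iff_lt] at h₁ h₂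
    omega

theorem exists_gap (G d : ℕ) (hd : (G + 2) ^ (d + 1) ≤ f^[d] 0) :
    ∃ lo hi, lo + G + 2 ≤ hi ∧ hi ≤ f^[d] 0 ∧ ∀ a, f a ≤ lo ∨ hi ≤ f a := by
  by_contra hno
  push Not at hno
  have hlin := hf.apply_succ_le_of_no_gap (fun lo hi h₁ h₂ => hno lo hi h₁ h₂)
  have hiter : ∀ j ≤ d, f^[j] 0 + 1 ≤ (G + 2) ^ (j + 1) := by
    intro j hj
    induction j with
    | zero => simp
    | succ j ih =>
      have hle : f^[j + 1] 0 ≤ f^[d] 0 := hf.iterate_le_iterate_left hj 0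
      rw [Function.iterate_succ_apply'] at hle ⊢
      calc f (f^[j] 0) + 1 ≤ (G + 2) * (f^[j] 0 + 1) := hlin _ hle
        _ ≤ (G + 2) * (G + 2) ^ (j + 1) := Nat.mul_le_mul_left _ (ih (by omega))
        _ = (G + 2) ^ (j + 1 + 1) := (pow_succ' _ _).symm
  have := hiter d le_rfl
  omega

end IsBoundFunction

def smallModelBound (φ : Formula) : ℕ := (6 ^ φ.subformulas.card + 2) ^ (sizeF φ + 1)

theorem exists_model_iterate_le {φ : Formula} {f : ℕ → ℕ} {V : ℕ → Set ℕ}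
    (hf : IsBoundFunction f) (hφ : SatB f V φ 0) :
    ∃ f' V', IsBoundFunction f' ∧ SatB f' V' φ 0 ∧ f'^[sizeF φ] 0 ≤ smallModelBound φ := by
  induction hH : f^[sizeF φ] 0 using Nat.strong_induction_on generalizing f V with
  | _ H ih =>
    by_cases hsmall : H ≤ smallModelBound φ
    · exact ⟨f, V, hf, hφ, hH ▸ hsmall⟩
    unfold smallModelBound at hsmall
    obtain ⟨lo, hi, hlen, hhi, hgap⟩ :=
      hf.exists_gap (6 ^ φ.subformulas.card) (sizeF φ) (by omega)
    obtain ⟨u, v, hlo, huv, hvhi, hnext, hsince⟩ := Cut.exists_compatible_cut φ f V hlen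
    have hf' : ∀ a, f a ≤ u ∨ hi ≤ f a := fun a => (hgap a).imp (fun h => h.trans hlo) id
    have hkept : ∀ a, Cut.Kept u v (f a) := fun a => (hf' a).imp id (by omega)
    have hcut := Cut.satB_bound_val_iff huv hvhi hf' hnext hsince φ
      (Formula.mem_subformulas_self φ) 0
    rw [Cut.embed_of_le (Nat.zero_le u)] at hcut
    refine ih _ ?_ (Cut.isBoundFunction_bound hkept huv.le hf) (hcut.2 hφ) rfl
    rw [Cut.bound_iterate_zero hkept huv.le, ← hH]
    unfold Cut.proj
    split_ifs <;> omega

def truncate (f : ℕ → ℕ) (R : ℕ) : ℕ → ℕ := fun x => if x ≤ R then f x else f R + (x - R)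

theorem truncate_of_le {f : ℕ → ℕ} {R x : ℕ} (h : x ≤ R) : truncate f R x = f x := if_pos h

theorem isBoundFunction_truncate {f : ℕ → ℕ} {R : ℕ} (hlt : ∀ x ≤ R, x < f x)
    (hmono : ∀ x < R, f x < f (x + 1)) : IsBoundFunction (truncate f R) where
  lt_apply x := by
    have := hlt R le_rfl
    unfold truncate
    split_ifs with hx
    · exact hlt x hx
    · omega
  apply_lt_apply_succ x := by
    have := hlt R le_rfl
    unfold truncate
    split_ifs with h₁ h₂
    · exact hmono x (by omega)
    · obtain rfl : x = R := by omega
      omega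
    all_goals omega

theorem exists_model_le_add {φ : Formula} {f : ℕ → ℕ} {V : ℕ → Set ℕ}
    (hf : IsBoundFunction f) (hφ : SatB f V φ 0) :
    ∃ f' V', IsBoundFunction f' ∧ SatB f' V' φ 0 ∧ ∀ x, f' x ≤ x + smallModelBound φ := by
  obtain ⟨g, V, hg, hgφ, hbound⟩ := exists_model_iterate_le hf hφ
  set R := g^[sizeF φ - 1] 0
  have hgR : g R = g^[sizeF φ] 0 := by
    obtain ⟨k, hk⟩ : ∃ k, sizeF φ = k + 1 := ⟨_, (Nat.sub_add_cancel (one_le_sizeF φ)).symm⟩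
    simp only [R, hk, Nat.add_sub_cancel, Function.iterate_succ_apply']
  refine ⟨truncate g R, V,
    isBoundFunction_truncate (fun x _ => hg.lt_apply x) (fun x _ => hg.apply_lt_apply_succ x),
    (satB_congr_bound hg φ 0 fun x hx => (truncate_of_le hx).symm).1 hgφ, fun x => ?_⟩
  unfold truncate
  split_ifs with hx
  · have := hg.strictMono.monotone hx
    omega
  · omega

theorem Nat.ofDigits_div_pow_mod {b : ℕ} {L : List ℕ} (hL : ∀ x ∈ L, x < b) (i : ℕ) :
    Nat.ofDigits b L / b ^ i % b = L.getD i 0 := by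
  induction L generalizing i with
  | nil => simp
  | cons d L ih =>
    have hd : d < b := hL d List.mem_cons_self
    cases i with
    | zero => simp [Nat.ofDigits_cons, Nat.mod_eq_of_lt hd]
    | succ i =>
      rw [List.getD_cons_succ, ← ih (fun x hx => hL x (List.mem_cons_of_mem d hx) ) i,
        pow_succ', ← Nat.div_div_eq_div_mul, Nat.ofDigits_cons,
        Nat.add_mul_div_left _ _ (by omega), Nat.div_eq_of_lt hd, zero_add]

theorem Nat.pair_le_pair {a b c d : ℕ} (hac : a ≤ c) (hbd : b ≤ d) : Nat.pair a b ≤ Nat.pair c d :=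
  calc Nat.pair a b ≤ Nat.pair c b := by
        rcases hac.eq_or_lt with rfl | h
        · exact le_rfl
        · exact (Nat.pair_lt_pair_left b h).le
    _ ≤ Nat.pair c d := by
        rcases hbd.eq_or_lt with rfl | h
        · exact le_rfl
        · exact (Nat.pair_lt_pair_right c h).le

theorem encF_injective : Function.Injective encF := by
  intro φ ψ h
  induction φ generalizing ψ with
  | atom i =>
    rcases ψ with j | _ | _ | _ | _ <;> simp only [encF] at h <;> first | omega | (congr 1; omega)
  | neg φ ih =>
    rcases ψ with _ | ψ | _ | _ | _ <;> simp only [encF] at h <;>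
      first | omega | exact congrArg Formula.neg (ih (by omega))
  | next φ ih =>
    rcases ψ with _ | _ | _ | ψ | _ <;> simp only [encF] at h <;>
      first | omega | exact congrArg Formula.next (ih (by omega))
  | conj φ₁ φ₂ ih₁ ih₂ =>
    rcases ψ with _ | _ | ⟨ψ₁, ψ₂⟩ | _ | _ <;> simp only [encF] at h <;> first | omega |
      (obtain ⟨h₁, h₂⟩ := Nat.pair_eq_pair.1
        (show Nat.pair (encF φ₁) (encF φ₂) = Nat.pair (encF ψ₁) (encF ψ₂) by omega)
       rw [ih₁ h₁, ih₂ h₂])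
  | since φ₁ φ₂ ih₁ ih₂ =>
    rcases ψ with _ | _ | _ | _ | ⟨ψ₁, ψ₂⟩ <;> simp only [encF] at h <;> first | omega |
      (obtain ⟨h₁, h₂⟩ := Nat.pair_eq_pair.1
        (show Nat.pair (encF φ₁) (encF φ₂) = Nat.pair (encF ψ₁) (encF ψ₂) by omega)
       rw [ih₁ h₁, ih₂ h₂])

theorem encF_surjective : Function.Surjective encF := by
  intro n
  induction n using Nat.strong_induction_on with
  | _ n ih =>
    have hpair (h : 0 < n) : ∃ ψ₁ ψ₂, Nat.pair (encF ψ₁) (encF ψ₂) = n / 5 := by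
      obtain ⟨ψ₁, hψ₁⟩ := ih _ ((Nat.unpair_left_le (n / 5)).trans_lt (by omega))
      obtain ⟨ψ₂, hψ₂⟩ := ih _ ((Nat.unpair_right_le (n / 5)).trans_lt (by omega))
      exact ⟨ψ₁, ψ₂, by rw [hψ₁, hψ₂, Nat.pair_unpair]⟩
    rcases (by omega : n % 5 = 0 ∨ n % 5 = 1 ∨ n % 5 = 2 ∨ n % 5 = 3 ∨ n % 5 = 4)
      with h | h | h | h | h
    · exact ⟨.atom (n / 5), by simp only [encF]; omega⟩
    · obtain ⟨ψ, hψ⟩ := ih (n / 5) (by omega)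
      exact ⟨.neg ψ, by simp only [encF]; omega⟩
    · obtain ⟨ψ₁, ψ₂, hψ⟩ := hpair (by omega)
      exact ⟨.conj ψ₁ ψ₂, by simp only [encF]; omega⟩
    · obtain ⟨ψ, hψ⟩ := ih (n / 5) (by omega)
      exact ⟨.next ψ, by simp only [encF]; omega⟩
    · obtain ⟨ψ₁, ψ₂, hψ⟩ := hpair (by omega)
      exact ⟨.since ψ₁ ψ₂, by simp only [encF]; omega⟩

theorem encF_lt_encF_neg (ψ : Formula) : encF ψ < encF (.neg ψ) := by
  simp only [encF]; omega

theorem encF_lt_encF_next (ψ : Formula) : encF ψ < encF (.next ψ) := by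
  simp only [encF]; omega

theorem encF_lt_encF_conj_left (ψ χ : Formula) : encF ψ < encF (.conj ψ χ) := by
  have := Nat.left_le_pair (encF ψ) (encF χ); simp only [encF]; omega

theorem encF_lt_encF_conj_right (ψ χ : Formula) : encF χ < encF (.conj ψ χ) := by
  have := Nat.right_le_pair (encF ψ) (encF χ); simp only [encF]; omega

theorem encF_lt_encF_since_left (ψ χ : Formula) : encF ψ < encF (.since ψ χ) := by
  have := Nat.left_le_pair (encF ψ) (encF χ); simp only [encF]; omega

theorem encF_lt_encF_since_right (ψ χ : Formula) : encF χ < encF (.since ψ χ) := by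
  have := Nat.right_le_pair (encF ψ) (encF χ); simp only [encF]; omega

theorem sizeF_le_encF (φ : Formula) : sizeF φ ≤ encF φ + 1 := by
  induction φ with
  | atom i => simp [sizeF]
  | neg ψ ih | next ψ ih => simp only [sizeF, encF]; omega
  | conj ψ χ ih₁ ih₂ | since ψ χ ih₁ ih₂ =>
    have := Nat.left_le_pair (encF ψ) (encF χ)
    have := Nat.right_le_pair (encF ψ) (encF χ)
    simp only [sizeF, encF]
    omega

namespace Certificate

def reachBound (n : ℕ) : ℕ := (6 ^ (n + 1) + 2) ^ (n + 2)

/-- Row `m` of a certificate for code `n` is checked at the states `a ≤ rowRange n m`; the rows of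
smaller codes reach further, by more than one `S`-step or `N`-step. -/
def rowRange (n m : ℕ) : ℕ := (n + 1 - m) * (reachBound n + 1)

def horizon (n : ℕ) : ℕ := rowRange n 0

def base (n : ℕ) : ℕ := horizon n + reachBound n + 1

/-- The reach of `S` at state `a`, stored as the `a`-th digit of `g` in base `base n`. -/
def reach (n g a : ℕ) : ℕ := g / base n ^ a % base n

/-- The truth value of code `m` at state `a`, stored as the binary digit of `t` at position
`Nat.pair m a`. -/
def Cell (t m a : ℕ) : Prop := t / 2 ^ Nat.pair m a % 2 = 1

/-- The truth table `t` obeys, at state `a`, the clause of the formula with code `m` (decoded as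
in `encF`); rows of atoms are unconstrained. -/
def RowOk (n g t m a : ℕ) : Prop :=
  (m % 5 = 1 → (Cell t m a ↔ ¬ Cell t (m / 5) a)) ∧
  (m % 5 = 2 → (Cell t m a ↔ Cell t (m / 5).unpair.1 a ∧ Cell t (m / 5).unpair.2 a)) ∧
  (m % 5 = 3 → (Cell t m a ↔ Cell t (m / 5) (a + 1))) ∧
  (m % 5 = 4 → (Cell t m a ↔ ∃ b < reach n g a + 1,
    a ≤ b ∧ Cell t (m / 5).unpair.2 b ∧ ∀ c < b, a ≤ c → Cell t (m / 5).unpair.1 c))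

def IsCertificate (n g t : ℕ) : Prop :=
  (∀ a < horizon n + 1, a < reach n g a ∧ reach n g a ≤ a + reachBound n) ∧
  (∀ a < horizon n, reach n g a < reach n g (a + 1)) ∧
  (∀ m < n + 1, ∀ a < rowRange n m + 1, RowOk n g t m a) ∧
  Cell t n 0

def HasCertificate (n : ℕ) : Prop :=
  ∃ g < base n ^ (horizon n + 1), ∃ t < 2 ^ (Nat.pair n (horizon n) + 1), IsCertificate n g t

def RowSpec (n g t : ℕ) : Formula → ℕ → Prop
  | .atom _, _ => True
  | .neg ψ, a => Cell t (encF (.neg ψ)) a ↔ ¬ Cell t (encF ψ) a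
  | .conj ψ χ, a => Cell t (encF (.conj ψ χ)) a ↔ Cell t (encF ψ) a ∧ Cell t (encF χ) a
  | .next ψ, a => Cell t (encF (.next ψ)) a ↔ Cell t (encF ψ) (a + 1)
  | .since ψ χ, a => Cell t (encF (.since ψ χ)) a ↔
      SinceHolds (Cell t (encF ψ)) (Cell t (encF χ)) a (reach n g a)

theorem rowOk_encF_iff {n g t a : ℕ} (θ : Formula) :
    RowOk n g t (encF θ) a ↔ RowSpec n g t θ a := by
  cases θ <;> simp [RowOk, RowSpec, encF, Nat.mul_add_div, sinceHolds_iff_exists_lt]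

theorem one_le_reachBound (n : ℕ) : 1 ≤ reachBound n := Nat.one_le_pow _ _ (by positivity)

theorem rowRange_le_horizon (n m : ℕ) : rowRange n m ≤ horizon n :=
  Nat.mul_le_mul_right _ (by omega)

theorem le_rowRange_of_encF_lt {n a b : ℕ} {θ ψ : Formula} (hθ : encF θ ≤ n)
    (hψ : encF ψ < encF θ) (ha : a ≤ rowRange n (encF θ)) (hb : b ≤ a + reachBound n + 1) :
    b ≤ rowRange n (encF ψ) := by
  unfold rowRange at ha ⊢
  calc b ≤ (n + 1 - encF θ + 1) * (reachBound n + 1) := by rw [add_one_mul]; omega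
    _ ≤ (n + 1 - encF ψ) * (reachBound n + 1) := Nat.mul_le_mul_right _ (by omega)

theorem smallModelBound_le_reachBound (φ : Formula) :
    smallModelBound φ ≤ reachBound (encF φ) := by
  have hsize := sizeF_le_encF φ
  have hcard := φ.card_subformulas_le.trans hsize
  unfold smallModelBound reachBound
  calc (6 ^ φ.subformulas.card + 2) ^ (sizeF φ + 1)
      ≤ (6 ^ (encF φ + 1) + 2) ^ (sizeF φ + 1) := by gcongr; norm_num
    _ ≤ (6 ^ (encF φ + 1) + 2) ^ (encF φ + 2) := Nat.pow_le_pow_right (by positivity) (by omega)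

section Soundness

/-- Row `5 * i = encF (atom i)` of the table is the valuation of atom `i`. -/
def val (t : ℕ) : ℕ → Set ℕ := fun i => {x | Cell t (5 * i) x}

theorem cell_iff_satB {n g t : ℕ} (hc : IsCertificate n g t) (θ : Formula) (hθ : encF θ ≤ n)
    (a : ℕ) (ha : a ≤ rowRange n (encF θ)) :
    Cell t (encF θ) a ↔ SatB (truncate (reach n g) (horizon n)) (val t) θ a := by
  obtain ⟨hreach, -, hrows, -⟩ := hc
  have hspec : ∀ θ, encF θ ≤ n → ∀ a ≤ rowRange n (encF θ), RowSpec n g t θ a :=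
    fun θ hθ a ha => (rowOk_encF_iff θ).1 (hrows _ (by omega) a (by omega))
  induction θ generalizing a with
  | atom i => rfl
  | neg ψ ih =>
    have hψ := encF_lt_encF_neg ψ
    exact (hspec _ hθ a ha).trans <| not_congr <|
      ih (by omega) a (le_rowRange_of_encF_lt hθ hψ ha (by omega))
  | conj ψ χ ih₁ ih₂ =>
    have hψ := encF_lt_encF_conj_left ψ χ
    have hχ := encF_lt_encF_conj_right ψ χ
    exact (hspec _ hθ a ha).trans <| and_congr
      (ih₁ (by omega) a (le_rowRange_of_encF_lt hθ hψ ha (by omega)))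
      (ih₂ (by omega) a (le_rowRange_of_encF_lt hθ hχ ha (by omega)))
  | next ψ ih =>
    have hψ := encF_lt_encF_next ψ
    exact (hspec _ hθ a ha).trans <|
      ih (by omega) (a + 1) (le_rowRange_of_encF_lt hθ hψ ha (by omega))
  | since ψ χ ih₁ ih₂ =>
    have hψ := encF_lt_encF_since_left ψ χ
    have hχ := encF_lt_encF_since_right ψ χ
    have haN : a ≤ horizon n := ha.trans (rowRange_le_horizon n _)
    have hra := (hreach a (by omega)).2
    rw [satB_since, truncate_of_le haN]
    exact (hspec _ hθ a ha).trans <| sinceHolds_congr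
      (fun c hc => ih₁ (by omega) c (le_rowRange_of_encF_lt hθ hψ ha (by omega)))
      (fun c hc => ih₂ (by omega) c (le_rowRange_of_encF_lt hθ hχ ha (by omega)))

theorem satisfiable_of_isCertificate {φ : Formula} {g t : ℕ}
    (hc : IsCertificate (encF φ) g t) : Satisfiable φ :=
  ⟨_, isBoundFunction_truncate (fun a ha => (hc.1 a (by omega)).1) hc.2.1, val t, 0,
    (cell_iff_satB hc φ le_rfl 0 (Nat.zero_le _)).1 hc.2.2.2⟩

end Soundness

section Completeness

variable {f : ℕ → ℕ} {V : ℕ → Set ℕ} {n : ℕ}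

open Classical in
noncomputable def tableDigit (f : ℕ → ℕ) (V : ℕ → Set ℕ) (p : ℕ) : ℕ :=
  if ∃ θ, encF θ = p.unpair.1 ∧ SatB f V θ p.unpair.2 then 1 else 0

noncomputable def table (f : ℕ → ℕ) (V : ℕ → Set ℕ) (n : ℕ) : ℕ :=
  Nat.ofDigits 2 ((List.range (Nat.pair n (horizon n) + 1)).map (tableDigit f V))

def reachCode (f : ℕ → ℕ) (n : ℕ) : ℕ :=
  Nat.ofDigits (base n) ((List.range (horizon n + 1)).map f)

theorem lt_base_of_le_add (hbound : ∀ x, f x ≤ x + reachBound n) :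
    ∀ x ∈ (List.range (horizon n + 1)).map f, x < base n := by
  simp only [List.mem_map, List.mem_range]
  rintro _ ⟨x, hx, rfl⟩
  have := hbound x
  unfold base
  omega

theorem reach_reachCode (hbound : ∀ x, f x ≤ x + reachBound n) {a : ℕ} (ha : a ≤ horizon n) :
    reach n (reachCode f n) a = f a := by
  unfold reach reachCode
  rw [Nat.ofDigits_div_pow_mod (lt_base_of_le_add hbound)]
  simp [List.getD_eq_getElem?_getD, Nat.lt_succ_iff.2 ha]

theorem reachCode_lt (hbound : ∀ x, f x ≤ x + reachBound n) :
    reachCode f n < base n ^ (horizon n + 1) := by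
  have hb : 1 < base n := by have := one_le_reachBound n; unfold base; omega
  simpa [reachCode] using Nat.ofDigits_lt_base_pow_length hb (lt_base_of_le_add hbound)

theorem tableDigit_lt_two : ∀ x ∈ (List.range (Nat.pair n (horizon n) + 1)).map (tableDigit f V),
    x < 2 := by
  simp only [List.mem_map]
  rintro _ ⟨p, -, rfl⟩
  unfold tableDigit
  split_ifs <;> omega

theorem table_lt : table f V n < 2 ^ (Nat.pair n (horizon n) + 1) :=
  (Nat.ofDigits_lt_base_pow_length (by norm_num) tableDigit_lt_two).trans_eq (by simp)

theorem cell_table_iff {θ : Formula} (hθ : encF θ ≤ n) {a : ℕ} (ha : a ≤ horizon n) :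
    Cell (table f V n) (encF θ) a ↔ SatB f V θ a := by
  have hpos : Nat.pair (encF θ) a < Nat.pair n (horizon n) + 1 :=
    Nat.lt_succ_of_le (Nat.pair_le_pair hθ ha)
  unfold Cell table
  rw [Nat.ofDigits_div_pow_mod tableDigit_lt_two]
  simp [List.getD_eq_getElem?_getD, hpos, tableDigit, encF_injective.eq_iff]

theorem rowSpec_table (hbound : ∀ x, f x ≤ x + reachBound n) {θ : Formula}
    (hθ : encF θ ≤ n) {a : ℕ} (ha : a ≤ rowRange n (encF θ)) :
    RowSpec n (reachCode f n) (table f V n) θ a := by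
  have hcell : ∀ ψ, encF ψ < encF θ → ∀ b ≤ a + reachBound n + 1,
      (Cell (table f V n) (encF ψ) b ↔ SatB f V ψ b) := fun ψ hψ b hb =>
    cell_table_iff (by omega) ((le_rowRange_of_encF_lt hθ hψ ha hb).trans (rowRange_le_horizon _ _))
  have hcellθ := cell_table_iff (f := f) (V := V) hθ (ha.trans (rowRange_le_horizon _ _))
  cases θ with
  | atom i => trivial
  | neg ψ => exact hcellθ.trans (not_congr (hcell ψ (encF_lt_encF_neg ψ) a (by omega))).symm
  | conj ψ χ =>
    exact hcellθ.trans (and_congr (hcell ψ (encF_lt_encF_conj_left ψ χ) a (by omega))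
      (hcell χ (encF_lt_encF_conj_right ψ χ) a (by omega))).symm
  | next ψ => exact hcellθ.trans (hcell ψ (encF_lt_encF_next ψ) (a + 1) (by omega)).symm
  | since ψ χ =>
    have hfa := hbound a
    simp only [RowSpec]
    rw [reach_reachCode hbound (ha.trans (rowRange_le_horizon _ _))]
    exact hcellθ.trans (sinceHolds_congr
      (fun c hc => hcell ψ (encF_lt_encF_since_left ψ χ) c (by omega))
      (fun c hc => hcell χ (encF_lt_encF_since_right ψ χ) c (by omega))).symm

theorem isCertificate_of_le_add {φ : Formula} (hf : IsBoundFunction f)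
    (hbound : ∀ x, f x ≤ x + reachBound (encF φ)) (hφ : SatB f V φ 0) :
    IsCertificate (encF φ) (reachCode f (encF φ)) (table f V (encF φ)) := by
  refine ⟨fun a ha => ?_, fun a ha => ?_, fun m hm a ha => ?_,
    (cell_table_iff le_rfl (Nat.zero_le _)).2 hφ⟩
  · rw [reach_reachCode hbound (by omega)]
    exact ⟨hf.lt_apply a, hbound a⟩
  · rw [reach_reachCode hbound (by omega), reach_reachCode hbound (by omega)]
    exact hf.apply_lt_apply_succ a
  · obtain ⟨θ, rfl⟩ := encF_surjective m
    exact (rowOk_encF_iff θ).2 (rowSpec_table hbound (by omega) (by omega))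

end Completeness

theorem hasCertificate_of_satisfiable {φ : Formula} (h : Satisfiable φ) :
    HasCertificate (encF φ) := by
  obtain ⟨f, hf, V, hφ⟩ := satisfiable_iff_satB_zero.1 h
  obtain ⟨f, V, hf, hφ, hbound⟩ := exists_model_le_add hf hφ
  have hbound' : ∀ x, f x ≤ x + reachBound (encF φ) :=
    fun x => (hbound x).trans (Nat.add_le_add_left (smallModelBound_le_reachBound φ) x)
  exact ⟨_, reachCode_lt hbound', _, table_lt, isCertificate_of_le_add hf hbound' hφ⟩

theorem satisfiable_iff_hasCertificate {φ : Formula} :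
    Satisfiable φ ↔ HasCertificate (encF φ) :=
  ⟨hasCertificate_of_satisfiable, fun ⟨_, _, _, _, hc⟩ => satisfiable_of_isCertificate hc⟩

end Certificate

section PrimrecCombinators

variable {α : Type*} [Primcodable α]

theorem Primrec.nat_pow : Primrec₂ ((· ^ ·) : ℕ → ℕ → ℕ) :=
  Primrec₂.unpaired'.1 Nat.Primrec.pow

theorem PrimrecPred.imp {p q : α → Prop} (hp : PrimrecPred p) (hq : PrimrecPred q) :
    PrimrecPred fun a => p a → q a :=
  (hp.not.or hq).of_eq fun _ => imp_iff_not_or.symm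

theorem PrimrecPred.iff {p q : α → Prop} (hp : PrimrecPred p) (hq : PrimrecPred q) :
    PrimrecPred fun a => (p a ↔ q a) :=
  ((hp.and hq).or (hp.not.and hq.not)).of_eq fun _ => iff_iff_and_or_not_and_not.symm

theorem PrimrecPred.exists_lt_of {p : α → ℕ → Prop} {b : α → ℕ} (hb : Primrec b)
    (hp : PrimrecRel p) : PrimrecPred fun a => ∃ y < b a, p a y :=
  ((PrimrecRel.exists_mem_list (R := fun y a => p a y) hp.swap).comp
    (Primrec.list_range.comp hb) .id).of_eq fun _ => by simp

theorem PrimrecPred.forall_lt_of {p : α → ℕ → Prop} {b : α → ℕ} (hb : Primrec b)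
    (hp : PrimrecRel p) : PrimrecPred fun a => ∀ y < b a, p a y :=
  ((PrimrecRel.forall_mem_list (R := fun y a => p a y) hp.swap).comp
    (Primrec.list_range.comp hb) .id).of_eq fun _ => by simp

end PrimrecCombinators

namespace Certificate

open Primrec

variable {α : Type*} [Primcodable α] {n g t m a : α → ℕ}

theorem primrec_reachBound : Primrec reachBound :=
  nat_pow.comp (nat_add.comp (nat_pow.comp (const 6) succ) (const 2))
    (nat_add.comp .id (const 2))

theorem primrec_rowRange : Primrec₂ rowRange :=
  nat_mul.comp (nat_sub.comp (succ.comp fst) snd) (succ.comp (primrec_reachBound.comp fst))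

theorem primrec_horizon : Primrec horizon := primrec_rowRange.comp .id (const 0)

theorem primrec_base : Primrec base :=
  succ.comp (nat_add.comp primrec_horizon primrec_reachBound)

theorem primrec_reach (hn : Primrec n) (hg : Primrec g) (ha : Primrec a) :
    Primrec fun x => reach (n x) (g x) (a x) :=
  nat_mod.comp (nat_div.comp hg (nat_pow.comp (primrec_base.comp hn) ha)) (primrec_base.comp hn)

theorem primrecPred_cell (ht : Primrec t) (hm : Primrec m) (ha : Primrec a) :
    PrimrecPred fun x => Cell (t x) (m x) (a x) :=
  Primrec.eq.comp (nat_mod.comp (nat_div.comp ht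
    (nat_pow.comp (const 2) (Primrec₂.natPair.comp hm ha))) (const 2)) (const 1)

theorem primrecPred_rowOk (hn : Primrec n) (hg : Primrec g) (ht : Primrec t) (hm : Primrec m)
    (ha : Primrec a) : PrimrecPred fun x => RowOk (n x) (g x) (t x) (m x) (a x) := by
  have hcase (k : ℕ) : PrimrecPred fun x => m x % 5 = k :=
    Primrec.eq.comp (nat_mod.comp hm (const 5)) (const k)
  have hd : Primrec fun x => m x / 5 := nat_div.comp hm (const 5)
  have hl : Primrec fun x => (m x / 5).unpair.1 := fst.comp (unpair.comp hd)
  have hr : Primrec fun x => (m x / 5).unpair.2 := snd.comp (unpair.comp hd)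
  have hcell := primrecPred_cell ht hm ha
  refine .and ((hcase 1).imp (hcell.iff (primrecPred_cell ht hd ha).not)) <|
    .and ((hcase 2).imp
      (hcell.iff ((primrecPred_cell ht hl ha).and (primrecPred_cell ht hr ha)))) <|
    .and ((hcase 3).imp (hcell.iff (primrecPred_cell ht hd (succ.comp ha)))) <|
    (hcase 4).imp (hcell.iff (PrimrecPred.exists_lt_of (succ.comp (primrec_reach hn hg ha)) ?_))
  refine (nat_le.comp (ha.comp fst) snd).and <|
    (primrecPred_cell (ht.comp fst) (hr.comp fst) snd).and <|
    PrimrecPred.forall_lt_of snd ((nat_le.comp (ha.comp (fst.comp fst)) snd).imp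
      (primrecPred_cell (ht.comp (fst.comp fst)) (hl.comp (fst.comp fst)) snd))

theorem primrecPred_isCertificate (hn : Primrec n) (hg : Primrec g) (ht : Primrec t) :
    PrimrecPred fun x => IsCertificate (n x) (g x) (t x) := by
  refine .and (PrimrecPred.forall_lt_of (succ.comp (primrec_horizon.comp hn)) ?_) <|
    .and (PrimrecPred.forall_lt_of (primrec_horizon.comp hn) ?_) <|
    .and (PrimrecPred.forall_lt_of (succ.comp hn) ?_) (primrecPred_cell ht hn (const 0))
  · exact (nat_lt.comp snd (primrec_reach (hn.comp fst) (hg.comp fst) snd)).and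
      (nat_le.comp (primrec_reach (hn.comp fst) (hg.comp fst) snd)
        (nat_add.comp snd (primrec_reachBound.comp (hn.comp fst))))
  · exact nat_lt.comp (primrec_reach (hn.comp fst) (hg.comp fst) snd)
      (primrec_reach (hn.comp fst) (hg.comp fst) (succ.comp snd))
  · exact PrimrecPred.forall_lt_of (succ.comp (primrec_rowRange.comp (hn.comp fst) snd))
      (primrecPred_rowOk (hn.comp (fst.comp fst)) (hg.comp (fst.comp fst))
        (ht.comp (fst.comp fst)) (snd.comp fst) snd)

theorem primrecPred_hasCertificate : PrimrecPred HasCertificate :=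
  PrimrecPred.exists_lt_of (nat_pow.comp primrec_base (succ.comp primrec_horizon)) <|
    PrimrecPred.exists_lt_of
      (nat_pow.comp (const 2) (succ.comp (Primrec₂.natPair.comp fst (primrec_horizon.comp fst))))
      (primrecPred_isCertificate (fst.comp fst) (snd.comp fst) snd)

end Certificate

/-- the satisfiability problem for `LTL_{Past}` is decidable:
satisfiability (over all bound functions and valuations) is a computable
predicate on (codes of) formulas. -/
theorem satisfiabilityPast_decidable :
    ∃ f' : ℕ → Bool, Computable f' ∧
      ∀ φ : Formula,
        ((∃ f : ℕ → ℕ, (∀ i, i < f i) ∧ (∀ i, f i < f (i + 1)) ∧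
            ∃ (V : ℕ → Set ℕ) (a : ℕ), SatB f V φ a) ↔ f' (encF φ) = true) := by
  obtain ⟨_, hprim⟩ := Certificate.primrecPred_hasCertificate
  refine ⟨fun n => decide (Certificate.HasCertificate n), hprim.to_comp, fun φ => ?_⟩
  rw [decide_eq_true_iff, ← Certificate.satisfiable_iff_hasCertificate]
  exact ⟨fun ⟨f, h₁, h₂, h⟩ => ⟨f, ⟨h₁, h₂⟩, h⟩, fun ⟨f, ⟨h₁, h₂⟩, h⟩ => ⟨f, h₁, h₂, h⟩⟩
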